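/- arXiv:1912.00964 — 3 statements merged into one kernel-verified Lean document; each statement's English description precedes it below -/
import Mathlib

section
/- Let a : ℝ^d → [0,∞) be measurable with ∫ a(x) dx = 1 and finite moments m_l^a := ∫ |x|^l a(x) dx < ∞ for l = 1, …, d+1, and let ψ(x) = 1/(1+|x|^{d+1}). Suppose θ : ℝ^d → [0,∞) satisfies θ(x) ≤ c·ψ(x) for all x and some c > 0. Then the convolution satisfies (a * θ)(x) ≤ c·ψ(x)·(1 + Σ_{l=0}^{d+1} C(d+1,l) m_l^a) for every x ∈ ℝ^d. -/
/-!
Since `‖x‖ ≤ ‖x - y‖ + ‖y‖` and `s + t ≤ max 1 t * (1 + s)`, the weight `ψ` satisfies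
`ψ y ≤ ψ x * (1 + (1 + ‖x - y‖) ^ (d + 1))`. Inserting this in the convolution integral moves
the whole `x`-dependence into `c ψ(x)`, and what is left is `∫ (1 + (1 + ‖z‖) ^ (d + 1)) a(z) dz`,
which the binomial theorem expands into the moments of `a`.
-/

open MeasureTheory

noncomputable def psi (d : ℕ) (x : EuclideanSpace ℝ (Fin d)) : ℝ :=
  1 / (1 + ‖x‖ ^ (d + 1))

open Finset

lemma add_pow_le_one_add_pow_mul {s t : ℝ} (hs : 0 ≤ s) (ht : 0 ≤ t) (n : ℕ) :
    (s + t) ^ n ≤ (1 + t ^ n) * (1 + s) ^ n := by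
  have hmax : s + t ≤ max 1 t * (1 + s) := by
    nlinarith [le_max_left 1 t, le_max_right 1 t]
  have hmax_pow : max 1 t ^ n ≤ 1 + t ^ n := by
    rcases max_cases 1 t with ⟨h, -⟩ | ⟨h, -⟩ <;> rw [h]
    · simp [pow_nonneg ht]
    · exact le_add_of_nonneg_left zero_le_one
  calc (s + t) ^ n ≤ (max 1 t * (1 + s)) ^ n := pow_le_pow_left₀ (by positivity) hmax n
    _ = max 1 t ^ n * (1 + s) ^ n := mul_pow _ _ _
    _ ≤ (1 + t ^ n) * (1 + s) ^ n := by gcongr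

lemma one_add_norm_pow_le_mul {E : Type*} [SeminormedAddCommGroup E] (x y : E) (n : ℕ) :
    1 + ‖x‖ ^ n ≤ (1 + ‖y‖ ^ n) * (1 + (1 + ‖x - y‖) ^ n) := by
  have h : ‖x‖ ^ n ≤ (1 + ‖y‖ ^ n) * (1 + ‖x - y‖) ^ n :=
    (pow_le_pow_left₀ (norm_nonneg x) (norm_le_norm_sub_add x y) n).trans
      (add_pow_le_one_add_pow_mul (norm_nonneg _) (norm_nonneg _) n)
  nlinarith [pow_nonneg (norm_nonneg y) n]

lemma psi_le_psi_mul (d : ℕ) (x y : EuclideanSpace ℝ (Fin d)) :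
    psi d y ≤ psi d x * (1 + (1 + ‖x - y‖) ^ (d + 1)) := by
  unfold psi
  rw [div_mul_eq_mul_div, one_mul, div_le_div_iff₀ (by positivity) (by positivity), one_mul,
    mul_comm]
  exact one_add_norm_pow_le_mul x y (d + 1)

lemma one_add_one_add_norm_pow_mul_eq {E : Type*} [SeminormedAddCommGroup E] (a : E → ℝ) (n : ℕ)
    (z : E) :
    (1 + (1 + ‖z‖) ^ n) * a z =
      a z + ∑ l ∈ range (n + 1), (n.choose l : ℝ) * (‖z‖ ^ l * a z) := by
  rw [add_comm 1 ‖z‖, add_pow, add_mul, one_mul, sum_mul]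
  exact congrArg _ (sum_congr rfl fun l _ => by ring)

section Moments

variable {E : Type*} [SeminormedAddCommGroup E] [MeasurableSpace E] {μ : Measure E} {a : E → ℝ}
  {n : ℕ}

lemma integrable_sum_choose_mul_moment (hmom : ∀ l ≤ n, Integrable (fun z => ‖z‖ ^ l * a z) μ) :
    Integrable (fun z => ∑ l ∈ range (n + 1), (n.choose l : ℝ) * (‖z‖ ^ l * a z)) μ :=
  integrable_finsetSum _ fun l hl => (hmom l (Nat.lt_succ_iff.mp (mem_range.mp hl))).const_mul _

lemma integrable_one_add_one_add_norm_pow_mul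
    (hmom : ∀ l ≤ n, Integrable (fun z => ‖z‖ ^ l * a z) μ) :
    Integrable (fun z => (1 + (1 + ‖z‖) ^ n) * a z) μ := by
  simp_rw [one_add_one_add_norm_pow_mul_eq a n]
  exact (by simpa using hmom 0 n.zero_le : Integrable a μ).add
    (integrable_sum_choose_mul_moment hmom)

lemma integral_one_add_one_add_norm_pow_mul
    (hmom : ∀ l ≤ n, Integrable (fun z => ‖z‖ ^ l * a z) μ) :
    ∫ z, (1 + (1 + ‖z‖) ^ n) * a z ∂μ =
      ∫ z, a z ∂μ + ∑ l ∈ range (n + 1), (n.choose l : ℝ) * ∫ z, ‖z‖ ^ l * a z ∂μ := by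
  simp_rw [one_add_one_add_norm_pow_mul_eq a n]
  rw [integral_add (by simpa using hmom 0 n.zero_le) (integrable_sum_choose_mul_moment hmom),
    integral_finsetSum _ fun l hl =>
      (hmom l (Nat.lt_succ_iff.mp (mem_range.mp hl))).const_mul _]
  simp_rw [integral_const_mul]

end Moments

theorem stmt4_general (d : ℕ) (a θ : EuclideanSpace ℝ (Fin d) → ℝ) (c : ℝ)
    (hc : 0 < c) (ha_nonneg : ∀ x, 0 ≤ a x)
    (ha_norm : ∫ x, a x = 1)
    (hmom : ∀ l ≤ d + 1, Integrable (fun x => ‖x‖ ^ l * a x))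
    (hθ_nonneg : ∀ x, 0 ≤ θ x)
    (hθ : ∀ x, θ x ≤ c * psi d x) (x : EuclideanSpace ℝ (Fin d)) :
    (∫ y, a (x - y) * θ y) ≤
      c * psi d x *
        (1 + ∑ l ∈ Finset.range (d + 2), ((d + 1).choose l : ℝ) * ∫ z, ‖z‖ ^ l * a z) := by
  set w : EuclideanSpace ℝ (Fin d) → ℝ := fun z => (1 + (1 + ‖z‖) ^ (d + 1)) * a z
  have hpointwise : ∀ y, a (x - y) * θ y ≤ c * psi d x * w (x - y) := fun y => calc
    a (x - y) * θ y ≤ a (x - y) * (c * (psi d x * (1 + (1 + ‖x - y‖) ^ (d + 1)))) :=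
      mul_le_mul_of_nonneg_left
        ((hθ y).trans (mul_le_mul_of_nonneg_left (psi_le_psi_mul d x y) hc.le)) (ha_nonneg _)
    _ = c * psi d x * w (x - y) := by ring
  calc ∫ y, a (x - y) * θ y ≤ ∫ y, c * psi d x * w (x - y) :=
      integral_mono_of_nonneg (.of_forall fun y => mul_nonneg (ha_nonneg _) (hθ_nonneg _))
        (((integrable_one_add_one_add_norm_pow_mul hmom).comp_sub_left x).const_mul _)
        (.of_forall hpointwise)
    _ = _ := by
      rw [integral_const_mul, integral_sub_left_eq_self w volume x,
        integral_one_add_one_add_norm_pow_mul hmom, ha_norm]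

/-- If `a ≥ 0`, `∫ a = 1`, the moments `m_l^a = ∫|x|^l a(x)dx` are finite for
`l ≤ d+1`, and `0 ≤ θ ≤ c·ψ`, then
`(a*θ)(x) ≤ c·ψ(x)·(1 + Σ_{l=0}^{d+1} C(d+1,l) m_l^a)`. -/
theorem stmt4 (d : ℕ) (hd : 1 ≤ d) (a θ : EuclideanSpace ℝ (Fin d) → ℝ) (c : ℝ)
    (hc : 0 < c) (ha_meas : Measurable a) (ha_nonneg : ∀ x, 0 ≤ a x)
    (ha_norm : ∫ x, a x = 1)
    (hmom : ∀ l ≤ d + 1, Integrable (fun x => ‖x‖ ^ l * a x))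
    (hθ_meas : Measurable θ) (hθ_nonneg : ∀ x, 0 ≤ θ x)
    (hθ : ∀ x, θ x ≤ c * psi d x) (x : EuclideanSpace ℝ (Fin d)) :
    (∫ y, a (x - y) * θ y) ≤
      c * psi d x *
        (1 + ∑ l ∈ Finset.range (d + 2), ((d + 1).choose l : ℝ) * ∫ z, ‖z‖ ^ l * a z) :=
  stmt4_general d a θ c hc ha_nonneg ha_norm hmom hθ_nonneg hθ x
end

section
/- Let a : ℝ^d → [0,∞) with ∫a = 1 and m_l^a := ∫|x|^l a(x) dx < ∞ for l = 1,…,d+1, and ψ(x) = 1/(1+|x|^{d+1}). Then for all τ > 0 and x ∈ ℝ^d, ∫_{ℝ^d} a(x−y) |exp(−τψ(y)) − exp(−τψ(x))| dy ≤ τ·c_a·ψ(x), where c_a = 2 + Σ_{l=0}^{d+1} C(d+1,l) m_l^a. -/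
open MeasureTheory

lemma abs_exp_neg_sub_le (s t : ℝ) (hs : 0 ≤ s) (ht : 0 ≤ t) :
    |Real.exp (-s) - Real.exp (-t)| ≤ |s - t| := by
  wlog h : t ≤ s with H
  · rw [abs_sub_comm, abs_sub_comm s t]
    exact H t s ht hs (le_of_not_ge h)
  · have hmono : Real.exp (-s) ≤ Real.exp (-t) := Real.exp_le_exp.2 (by linarith)
    rw [abs_of_nonpos (by linarith), abs_of_nonneg (by linarith)]
    have e1 : Real.exp (-s) = Real.exp (-t) * Real.exp (t - s) := by
      rw [← Real.exp_add]; ring_nf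
    have e2 : (t - s) + 1 ≤ Real.exp (t - s) := Real.add_one_le_exp _
    have e3 : Real.exp (-t) ≤ 1 := Real.exp_le_one_iff.2 (by linarith)
    have e4 : 0 < Real.exp (-t) := Real.exp_pos _
    nlinarith

lemma pow_le_one_add_pow (B : ℝ) (hB : 0 ≤ B) {k n : ℕ} (hk : k ≤ n) :
    B ^ k ≤ 1 + B ^ n := by
  rcases le_total B 1 with h | h
  · have h1 : B ^ k ≤ 1 := pow_le_one₀ hB h
    have h2 : 0 ≤ B ^ n := pow_nonneg hB n
    linarith
  · have h1 : B ^ k ≤ B ^ n := pow_le_pow_right₀ h hk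
    linarith

/-- `∫ a(x−y)|exp(−τψ(y)) − exp(−τψ(x))| dy ≤ τ c_a ψ(x)` with
`c_a = 2 + Σ_{l=0}^{d+1} C(d+1,l) m_l^a`. -/
theorem stmt6 (d : ℕ) (hd : 1 ≤ d) (a : EuclideanSpace ℝ (Fin d) → ℝ)
    (ha_meas : Measurable a) (ha_nonneg : ∀ x, 0 ≤ a x)
    (ha_norm : ∫ x, a x = 1)
    (hmom : ∀ l ≤ d + 1, Integrable (fun x => ‖x‖ ^ l * a x))
    (τ : ℝ) (hτ : 0 < τ) (x : EuclideanSpace ℝ (Fin d)) :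
    (∫ y, a (x - y) * |Real.exp (-τ * psi d y) - Real.exp (-τ * psi d x)|) ≤
      τ * (2 + ∑ l ∈ Finset.range (d + 2), ((d + 1).choose l : ℝ) * ∫ z, ‖z‖ ^ l * a z)
        * psi d x := by
  set n := d + 1 with hn
  have hψpos : ∀ z : EuclideanSpace ℝ (Fin d), 0 < psi d z := by
    intro z
    have : (0:ℝ) < 1 + ‖z‖ ^ n := by positivity
    exact div_pos one_pos this
  -- the dominating function
  set S : EuclideanSpace ℝ (Fin d) → ℝ :=
    fun y => ∑ l ∈ Finset.range (n + 1), (n.choose l : ℝ) * ‖x - y‖ ^ l with hS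
  have hS_nonneg : ∀ y, 0 ≤ S y := by
    intro y
    apply Finset.sum_nonneg
    intro l _
    positivity
  have hS_one : ∀ y, 1 ≤ S y := by
    intro y
    have h0 : ((n.choose 0 : ℝ) * ‖x - y‖ ^ 0) = 1 := by simp
    calc (1:ℝ) = (n.choose 0 : ℝ) * ‖x - y‖ ^ 0 := h0.symm
    _ ≤ S y := by
        apply Finset.single_le_sum (f := fun l => (n.choose l : ℝ) * ‖x - y‖ ^ l)
        · intro l _; positivity
        · simp
  -- key pointwise bound: |ψ y - ψ x| ≤ ψ x * S y
  have hkey : ∀ y : EuclideanSpace ℝ (Fin d), |psi d y - psi d x| ≤ psi d x * S y := by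
    intro y
    set A := ‖x‖ with hA
    set B := ‖y‖ with hB
    have hA0 : 0 ≤ A := norm_nonneg _
    have hB0 : 0 ≤ B := norm_nonneg _
    have hdenA : (0:ℝ) < 1 + A ^ n := by positivity
    have hdenB : (0:ℝ) < 1 + B ^ n := by positivity
    have hdiff : psi d y - psi d x = (A ^ n - B ^ n) / ((1 + A ^ n) * (1 + B ^ n)) := by
      unfold psi
      rw [div_sub_div _ _ (ne_of_gt hdenB) (ne_of_gt hdenA)]
      ring_nf
    have hnum : |A ^ n - B ^ n| ≤ (1 + B ^ n) * S y := by
      rcases le_total A B with h | h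
      · rw [abs_sub_comm, abs_of_nonneg (by nlinarith [pow_le_pow_left₀ hA0 h n])]
        have h1 : B ^ n - A ^ n ≤ B ^ n := by nlinarith [pow_nonneg hA0 n]
        have h2 : (1 + B ^ n) * 1 ≤ (1 + B ^ n) * S y :=
          mul_le_mul_of_nonneg_left (hS_one y) (le_of_lt hdenB)
        linarith
      · rw [abs_of_nonneg (by nlinarith [pow_le_pow_left₀ hB0 h n])]
        have htri : A ≤ ‖x - y‖ + B := by
          calc A = ‖(x - y) + y‖ := by rw [sub_add_cancel]
          _ ≤ ‖x - y‖ + B := norm_add_le _ _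
        have hpow : A ^ n ≤ (‖x - y‖ + B) ^ n := pow_le_pow_left₀ hA0 htri n
        have hbinom : (‖x - y‖ + B) ^ n
            = ∑ l ∈ Finset.range (n + 1), ‖x - y‖ ^ l * B ^ (n - l) * (n.choose l : ℝ) :=
          add_pow _ _ _
        have hsum : ∑ l ∈ Finset.range (n + 1), ‖x - y‖ ^ l * B ^ (n - l) * (n.choose l : ℝ)
            ≤ (1 + B ^ n) * S y := by
          rw [hS, Finset.mul_sum]
          apply Finset.sum_le_sum
          intro l hl
          have hln : n - l ≤ n := Nat.sub_le _ _
          have hBle : B ^ (n - l) ≤ 1 + B ^ n := pow_le_one_add_pow B hB0 hln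
          have hr : (0:ℝ) ≤ ‖x - y‖ ^ l := by positivity
          have hc : (0:ℝ) ≤ (n.choose l : ℝ) := by positivity
          calc ‖x - y‖ ^ l * B ^ (n - l) * (n.choose l : ℝ)
              = (‖x - y‖ ^ l * (n.choose l : ℝ)) * B ^ (n - l) := by ring
          _ ≤ (‖x - y‖ ^ l * (n.choose l : ℝ)) * (1 + B ^ n) :=
              mul_le_mul_of_nonneg_left hBle (mul_nonneg hr hc)
          _ = (1 + B ^ n) * ((n.choose l : ℝ) * ‖x - y‖ ^ l) := by ring
        have hBn : 0 ≤ B ^ n := pow_nonneg hB0 n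
        linarith [hbinom ▸ hpow, hsum]
    have hψx : psi d x = 1 / (1 + A ^ n) := rfl
    have habs : |(A ^ n - B ^ n) / ((1 + A ^ n) * (1 + B ^ n))|
        = |A ^ n - B ^ n| / ((1 + A ^ n) * (1 + B ^ n)) := by
      rw [abs_div, abs_of_pos (mul_pos hdenA hdenB)]
    rw [hdiff, habs, div_le_iff₀ (mul_pos hdenA hdenB), hψx]
    calc |A ^ n - B ^ n| ≤ (1 + B ^ n) * S y := hnum
    _ = 1 / (1 + A ^ n) * S y * ((1 + A ^ n) * (1 + B ^ n)) := by
        field_simp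
  -- integrability of the dominating function
  have hint_l : ∀ l ∈ Finset.range (n + 1),
      Integrable (fun y : EuclideanSpace ℝ (Fin d) => ‖x - y‖ ^ l * a (x - y)) := by
    intro l hl
    have := (hmom l (by simpa using Nat.lt_succ_iff.mp (Finset.mem_range.mp hl))).comp_sub_left x
    exact this
  have hint_g : Integrable (fun y : EuclideanSpace ℝ (Fin d) =>
      τ * psi d x * (∑ l ∈ Finset.range (n + 1), (n.choose l : ℝ) * (‖x - y‖ ^ l * a (x - y)))) := by
    apply Integrable.const_mul
    apply integrable_finset_sum
    intro l hl
    exact (hint_l l hl).const_mul _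
  -- pointwise comparison
  have hpt : ∀ y : EuclideanSpace ℝ (Fin d),
      a (x - y) * |Real.exp (-τ * psi d y) - Real.exp (-τ * psi d x)|
        ≤ τ * psi d x * (∑ l ∈ Finset.range (n + 1), (n.choose l : ℝ) * (‖x - y‖ ^ l * a (x - y))) := by
    intro y
    have hexp : |Real.exp (-τ * psi d y) - Real.exp (-τ * psi d x)| ≤ τ * |psi d y - psi d x| := by
      have h1 := abs_exp_neg_sub_le (τ * psi d y) (τ * psi d x)
        (mul_nonneg hτ.le (hψpos y).le) (mul_nonneg hτ.le (hψpos x).le)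
      have h2 : |τ * psi d y - τ * psi d x| = τ * |psi d y - psi d x| := by
        rw [← mul_sub, abs_mul, abs_of_pos hτ]
      rw [h2] at h1
      simpa only [neg_mul] using h1
    have hbound : |Real.exp (-τ * psi d y) - Real.exp (-τ * psi d x)|
        ≤ τ * (psi d x * S y) :=
      le_trans hexp (by
        have := hkey y
        nlinarith)
    calc a (x - y) * |Real.exp (-τ * psi d y) - Real.exp (-τ * psi d x)|
        ≤ a (x - y) * (τ * (psi d x * S y)) :=
          mul_le_mul_of_nonneg_left hbound (ha_nonneg _)
    _ = τ * psi d x * (∑ l ∈ Finset.range (n + 1), (n.choose l : ℝ) * (‖x - y‖ ^ l * a (x - y))) := by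
        simp only [hS, Finset.mul_sum]
        exact Finset.sum_congr rfl (fun l _ => by ring)
  -- integral comparison
  have hmono : (∫ y, a (x - y) * |Real.exp (-τ * psi d y) - Real.exp (-τ * psi d x)|)
      ≤ ∫ y, τ * psi d x * (∑ l ∈ Finset.range (n + 1), (n.choose l : ℝ) * (‖x - y‖ ^ l * a (x - y))) := by
    apply integral_mono_of_nonneg
    · filter_upwards with y
      exact mul_nonneg (ha_nonneg _) (abs_nonneg _)
    · exact hint_g
    · filter_upwards with y
      exact hpt y
  -- compute the RHS integral
  have hcomp : (∫ y, τ * psi d x * (∑ l ∈ Finset.range (n + 1), (n.choose l : ℝ) * (‖x - y‖ ^ l * a (x - y))))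
      = τ * psi d x * ∑ l ∈ Finset.range (n + 1), (n.choose l : ℝ) * ∫ z, ‖z‖ ^ l * a z := by
    rw [integral_const_mul]
    congr 1
    rw [integral_finset_sum _ (fun l hl => (hint_l l hl).const_mul _)]
    apply Finset.sum_congr rfl
    intro l hl
    rw [integral_const_mul]
    congr 1
    exact integral_sub_left_eq_self (fun z => ‖z‖ ^ l * a z) volume x
  have hm_nonneg : ∀ l, 0 ≤ ∫ z, ‖z‖ ^ l * a z := by
    intro l
    apply integral_nonneg
    intro z
    exact mul_nonneg (by positivity) (ha_nonneg z)
  have hsum_nonneg : 0 ≤ ∑ l ∈ Finset.range (n + 1), (n.choose l : ℝ) * ∫ z, ‖z‖ ^ l * a z := by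
    apply Finset.sum_nonneg
    intro l _
    exact mul_nonneg (by positivity) (hm_nonneg l)
  calc (∫ y, a (x - y) * |Real.exp (-τ * psi d y) - Real.exp (-τ * psi d x)|)
      ≤ τ * psi d x * ∑ l ∈ Finset.range (n + 1), (n.choose l : ℝ) * ∫ z, ‖z‖ ^ l * a z := by
        rw [← hcomp]; exact hmono
  _ ≤ τ * (2 + ∑ l ∈ Finset.range (n + 1), (n.choose l : ℝ) * ∫ z, ‖z‖ ^ l * a z) * psi d x := by
      have hψ := le_of_lt (hψpos x)
      nlinarith
end

section
/- Let T(ϑ₂, ϑ₁) = ((ϑ₂ − ϑ₁)/2)·exp(−⟨φ⟩·e^{ϑ₂}) for ϑ₂ > ϑ₁, where ⟨φ⟩ > 0 is fixed. Then sup_{ϑ' > ϑ} T(ϑ', ϑ) = (δ(ϑ)/2)·exp(−1/δ(ϑ)), where δ(ϑ) is the unique positive solution of δ·e^δ = e^{−ϑ}/⟨φ⟩, and the supremum is attained at ϑ' = ϑ + δ(ϑ). -/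
/-! Put `c = ⟨φ⟩ e^ϑ` and `t = ϑ' - ϑ`, so that `2 T(ϑ', ϑ) = t exp(-c eᵗ)` and the defining
equation of `δ` reads `c e^δ = 1/δ`. Writing `s = t - δ`, two applications of `x + 1 ≤ eˣ` give
`t/δ = 1 + s/δ ≤ exp(s/δ) ≤ exp((eˢ - 1)/δ)`, which rearranges to `t exp(-c eᵗ) ≤ δ exp(-1/δ)`. -/

open Real

theorem mul_exp_neg_mul_exp_le {c δ : ℝ} (hδ : 0 < δ) (hc : c * exp δ = 1 / δ) (t : ℝ) :
    t * exp (-(c * exp t)) ≤ δ * exp (-1 / δ) := by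
  set s := t - δ
  have hct : c * exp t = exp s / δ := by
    rw [show t = δ + s by ring, exp_add, ← mul_assoc, hc]; ring
  have hratio : t / δ ≤ exp ((exp s - 1) / δ) :=
    calc t / δ = s / δ + 1 := by field_simp; ring
      _ ≤ exp (s / δ) := add_one_le_exp _
      _ ≤ exp ((exp s - 1) / δ) := by
        gcongr
        linarith [add_one_le_exp s]
  calc t * exp (-(c * exp t)) = δ * (t / δ) * exp (-(c * exp t)) := by field_simp
    _ ≤ δ * exp ((exp s - 1) / δ) * exp (-(c * exp t)) := by gcongr
    _ = δ * exp (-1 / δ) := by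
      rw [mul_assoc, ← exp_add, hct]; ring_nf

theorem mul_exp_mul_exp_eq_one_div {φ ϑ δ : ℝ} (hδ : 0 < δ)
    (hδeq : δ * exp δ = exp (-ϑ) / φ) : φ * exp ϑ * exp δ = 1 / δ := by
  have hφ : φ ≠ 0 := by
    rintro rfl
    rw [div_zero] at hδeq
    exact (mul_pos hδ (exp_pos δ)).ne' hδeq
  rw [exp_neg] at hδeq
  field_simp at hδeq ⊢
  linear_combination hδeq

theorem stmt15_general (φ ϑ δ : ℝ) (hδ : 0 < δ)
    (hδeq : δ * Real.exp δ = Real.exp (-ϑ) / φ) :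
    IsGreatest {r : ℝ | ∃ ϑ' > ϑ, r = (ϑ' - ϑ) / 2 * Real.exp (-φ * Real.exp ϑ')}
      (δ / 2 * Real.exp (-1 / δ)) ∧
    (ϑ + δ - ϑ) / 2 * Real.exp (-φ * Real.exp (ϑ + δ)) =
      δ / 2 * Real.exp (-1 / δ) := by
  have hc := mul_exp_mul_exp_eq_one_div hδ hδeq
  have hT : ∀ ϑ', (ϑ' - ϑ) / 2 * exp (-φ * exp ϑ') =
      (ϑ' - ϑ) / 2 * exp (-(φ * exp ϑ * exp (ϑ' - ϑ))) := by
    intro ϑ'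
    rw [mul_assoc, ← exp_add, add_sub_cancel, neg_mul]
  have hattained : (ϑ + δ - ϑ) / 2 * exp (-φ * exp (ϑ + δ)) = δ / 2 * exp (-1 / δ) := by
    rw [hT, add_sub_cancel_left, hc, neg_div]
  refine ⟨⟨⟨ϑ + δ, by linarith, hattained.symm⟩, ?_⟩, hattained⟩
  rintro _ ⟨ϑ', -, rfl⟩
  rw [hT]
  linarith [mul_exp_neg_mul_exp_le hδ hc (ϑ' - ϑ)]

/-- For `T(ϑ',ϑ) = ((ϑ'−ϑ)/2) exp(−⟨φ⟩ e^{ϑ'})`, the supremum over `ϑ' > ϑ` equals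
`(δ/2) exp(−1/δ)` where `δ e^δ = e^{−ϑ}/⟨φ⟩`, and it is attained at `ϑ' = ϑ + δ`. -/
theorem stmt15 (φ ϑ δ : ℝ) (hφ : 0 < φ) (hδ : 0 < δ)
    (hδeq : δ * Real.exp δ = Real.exp (-ϑ) / φ) :
    IsGreatest {r : ℝ | ∃ ϑ' > ϑ, r = (ϑ' - ϑ) / 2 * Real.exp (-φ * Real.exp ϑ')}
      (δ / 2 * Real.exp (-1 / δ)) ∧
    (ϑ + δ - ϑ) / 2 * Real.exp (-φ * Real.exp (ϑ + δ)) =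
      δ / 2 * Real.exp (-1 / δ) :=
  stmt15_general φ ϑ δ hδ hδeq
end
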